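/- Let X = (g₁, g₂) be a pair of hyperbolic isometries of a simplicial tree that does not satisfy the ping-pong hypothesis: the axes γ₁ and γ₂ overlap in a path of length Δ(γ₁,γ₂) ≥ min{l(g₁), l(g₂)}. Then X is not minimal; specifically, after relabeling so that l(g₁) ≤ l(g₂) and the axes have the same orientation, the replacement g₂ ↦ g₂g₁⁻¹ satisfies L(g₁, g₂g₁⁻¹) < L(g₁, g₂), where L(h₁,h₂) = l(h₁) + l(h₂) + l(h₁h₂) + l(h₁h₂⁻¹). -/

import Mathlib

open SimpleGraph

variable {V : Type*}

/-- Translation length of a graph automorphism of `G` (min displacement over vertices). -/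
noncomputable def ell (G : SimpleGraph V) (g : G ≃g G) : ℕ :=
  sInf (Set.range fun x => G.dist x (g x))

/-- The set of vertices realizing the minimal displacement (the axis, for hyperbolic `g`). -/
def axisSet (G : SimpleGraph V) (g : G ≃g G) : Set V :=
  {x | G.dist x (g x) = ell G g}

/-- `g` acts without inversions: no edge is flipped. -/
def noInv (G : SimpleGraph V) (g : G ≃g G) : Prop :=
  ∀ x y, G.Adj x y → ¬(g x = y ∧ g y = x)

/-- The segment (geodesic) between `p` and `q` in the tree. -/
def seg (G : SimpleGraph V) (p q : V) : Set V :=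
  {x | G.dist p x + G.dist x q = G.dist p q}

/-- The open segment between `p` and `q` (endpoints removed). -/
def openSeg (G : SimpleGraph V) (p q : V) : Set V :=
  {x | x ∈ seg G p q ∧ x ≠ p ∧ x ≠ q}

/-- Distance from a vertex to a set of vertices. -/
noncomputable def distToSet (G : SimpleGraph V) (x : V) (S : Set V) : ℕ :=
  sInf (G.dist x '' S)

/-- Distance between two sets of vertices. -/
noncomputable def setDist (G : SimpleGraph V) (S T : Set V) : ℕ :=
  sInf (Set.image2 G.dist S T)

/-- The projection of `B` onto `A`: points of `A` at minimal distance from `B`. -/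
noncomputable def projOn (G : SimpleGraph V) (A B : Set V) : Set V :=
  {x | x ∈ A ∧ distToSet G x B = setDist G A B}

/-- `g` translates the vertex `p` (assumed on its axis) towards the vertex `q`. -/
noncomputable def translatesToward (G : SimpleGraph V) (g : G ≃g G) (p q : V) : Prop :=
  (G.dist (g p) q : ℤ) = |(G.dist p q : ℤ) - (ell G g : ℤ)|

section TreeAux

open SimpleGraph Walk

variable {G : SimpleGraph V}

/-- In a tree, every path realizes the distance. -/
lemma tree_path_length (hT : G.IsTree) {u v : V} (w : G.Walk u v) (hw : w.IsPath) :
    w.length = G.dist u v := by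
  obtain ⟨p, hp, hl⟩ := hT.isConnected.exists_path_of_dist u v
  rw [(hT.existsUnique_path u v).unique hw hp, hl]

/-- A vertex on a geodesic walk splits the distance. -/
lemma seg_of_mem_support (hc : G.Connected) {u v x : V} (w : G.Walk u v)
    (hl : w.length = G.dist u v) (hx : x ∈ w.support) :
    G.dist u x + G.dist x v = G.dist u v := by
  classical
  have h1 : G.dist u x ≤ (w.takeUntil x hx).length := dist_le _
  have h2 : G.dist x v ≤ (w.dropUntil x hx).length := dist_le _
  have h3 : (w.takeUntil x hx).length + (w.dropUntil x hx).length = w.length := by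
    have := congrArg Walk.length (w.take_spec hx)
    rwa [length_append] at this
  have h4 : G.dist u v ≤ G.dist u x + G.dist x v := hc.dist_triangle
  omega

lemma dc (G : SimpleGraph V) (a b : V) : G.dist a b = G.dist b a := SimpleGraph.dist_comm

lemma seg_symm {a b x : V} (h : x ∈ seg G a b) : x ∈ seg G b a := by
  simp only [seg, Set.mem_setOf_eq] at *
  rw [dc G b x, dc G x a, dc G b a]
  omega

lemma left_mem_seg (a b : V) : a ∈ seg G a b := by
  simp [seg]

lemma right_mem_seg (a b : V) : b ∈ seg G a b := by
  simp [seg]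

lemma seg_trans (hc : G.Connected) {a b c x : V} (hb : b ∈ seg G a c) (hx : x ∈ seg G a b) :
    x ∈ seg G a c := by
  simp only [seg, Set.mem_setOf_eq] at *
  have h1 : G.dist a c ≤ G.dist a x + G.dist x c := hc.dist_triangle
  have h2 : G.dist x c ≤ G.dist x b + G.dist b c := hc.dist_triangle
  omega

/-- Subsegment distance formula in a tree. -/
lemma seg_dist_sub (hT : G.IsTree) {a b x y : V} (hx : x ∈ seg G a b) (hy : y ∈ seg G a b)
    (hxy : G.dist a x ≤ G.dist a y) : G.dist x y + G.dist a x = G.dist a y := by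
  have hc := hT.isConnected
  obtain ⟨w1, hw1⟩ := hc.exists_walk_length_eq_dist a x
  obtain ⟨w2, hw2⟩ := hc.exists_walk_length_eq_dist x b
  obtain ⟨u1, hu1⟩ := hc.exists_walk_length_eq_dist a y
  obtain ⟨u2, hu2⟩ := hc.exists_walk_length_eq_dist y b
  have hx' : G.dist a x + G.dist x b = G.dist a b := hx
  have hy' : G.dist a y + G.dist y b = G.dist a b := hy
  have hW : (w1.append w2).length = G.dist a b := by
    rw [length_append, hw1, hw2, hx']
  have hU : (u1.append u2).length = G.dist a b := by
    rw [length_append, hu1, hu2, hy']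
  have hWp : (w1.append w2).IsPath := isPath_of_length_eq_dist _ hW
  have hUp : (u1.append u2).IsPath := isPath_of_length_eq_dist _ hU
  have hEq : w1.append w2 = u1.append u2 := (hT.existsUnique_path a b).unique hWp hUp
  have hySup : y ∈ (w1.append w2).support := by
    rw [hEq, mem_support_append_iff]
    left
    exact end_mem_support u1
  rw [mem_support_append_iff] at hySup
  rcases hySup with h | h
  · have := seg_of_mem_support hc w1 hw1 h
    have h5 : G.dist x y ≤ G.dist x a + G.dist a y := hc.dist_triangle
    have h6 : G.dist y x = G.dist x y := dc G y x
    have h7 : G.dist x a = G.dist a x := dc G x a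
    omega
  · have := seg_of_mem_support hc w2 hw2 h
    omega

lemma seg_eq_of_dist_eq (hT : G.IsTree) {a b x y : V} (hx : x ∈ seg G a b) (hy : y ∈ seg G a b)
    (h : G.dist a x = G.dist a y) : x = y := by
  have := seg_dist_sub hT hx hy h.le
  have hz : G.dist x y = 0 := by omega
  exact (hT.isConnected.dist_eq_zero_iff).1 hz

lemma mem_seg_of_le (hT : G.IsTree) {a b x y : V} (hx : x ∈ seg G a b) (hy : y ∈ seg G a b)
    (h : G.dist a x ≤ G.dist a y) : x ∈ seg G a y := by
  have := seg_dist_sub hT hx hy h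
  simp only [seg, Set.mem_setOf_eq]
  omega

/-- Median (tripod) lemma for trees. -/
lemma tree_median (hT : G.IsTree) (x y z : V) :
    ∃ m, m ∈ seg G x y ∧ m ∈ seg G x z ∧ m ∈ seg G y z := by
  classical
  have hc := hT.isConnected
  obtain ⟨w, hwp, hwl⟩ := hc.exists_path_of_dist y z
  have hne : ((fun v => G.dist x v) '' {v | v ∈ w.support}).Nonempty :=
    ⟨G.dist x y, y, w.start_mem_support, rfl⟩
  obtain ⟨m, hmS, hmd⟩ := Nat.sInf_mem hne
  have hmd' : G.dist x m = sInf ((fun v => G.dist x v) '' {v | v ∈ w.support}) := hmd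
  have hmin : ∀ v ∈ w.support, G.dist x m ≤ G.dist x v := by
    intro v hv
    rw [hmd']
    exact Nat.sInf_le ⟨v, hv, rfl⟩
  obtain ⟨u, hul⟩ := hc.exists_walk_length_eq_dist x m
  have hup : u.IsPath := isPath_of_length_eq_dist _ hul
  -- every vertex of u other than m that lies on w must be m
  have hkey : ∀ v, v ∈ u.support → v ∈ w.support → v = m := by
    intro v hvu hvw
    have h1 := seg_of_mem_support hc u hul hvu
    have h2 := hmin v hvw
    have : G.dist v m = 0 := by omega
    exact hc.dist_eq_zero_iff.1 this
  -- lengths of the two halves of w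
  have hm1 : G.dist y m ≤ (w.takeUntil m hmS).length := dist_le _
  have hm2 : G.dist m z ≤ (w.dropUntil m hmS).length := dist_le _
  have hm3 : (w.takeUntil m hmS).length + (w.dropUntil m hmS).length = w.length := by
    have := congrArg Walk.length (w.take_spec hmS)
    rwa [length_append] at this
  have htri : G.dist y z ≤ G.dist y m + G.dist m z := hc.dist_triangle
  have hlen1 : (w.takeUntil m hmS).length = G.dist y m := by omega
  have hlen2 : (w.dropUntil m hmS).length = G.dist m z := by omega
  -- path from y to x through m
  have hYX : G.dist y x = G.dist y m + G.dist m x := by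
    have hP : ((w.takeUntil m hmS).append u.reverse).IsPath := by
      rw [isPath_def, support_append]
      refine List.Nodup.append ((hwp.takeUntil hmS).support_nodup) ?_ ?_
      · exact ((hup.reverse).support_nodup).tail
      · intro v hv1 hv2
        have hvq : v ∈ u.reverse.support := List.mem_of_mem_tail hv2
        rw [support_reverse, List.mem_reverse] at hvq
        have hvw : v ∈ w.support := support_takeUntil_subset w hmS hv1
        have : v = m := hkey v hvq hvw
        subst this
        have : u.reverse.support = v :: u.reverse.support.tail := support_eq_cons _
        have hnd : u.reverse.support.Nodup := (hup.reverse).support_nodup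
        rw [this] at hnd
        exact (List.nodup_cons.1 hnd).1 hv2
    have := tree_path_length hT _ hP
    rw [length_append, hlen1, length_reverse, hul] at this
    have h8 : G.dist y x = G.dist y m + G.dist m x := by
      rw [← this, dc G m x]
    exact h8
  -- path from x to z through m
  have hXZ : G.dist x z = G.dist x m + G.dist m z := by
    have hP : (u.append (w.dropUntil m hmS)).IsPath := by
      rw [isPath_def, support_append]
      refine List.Nodup.append hup.support_nodup ?_ ?_
      · exact ((hwp.dropUntil hmS).support_nodup).tail
      · intro v hv1 hv2
        have hvw : v ∈ w.support :=
          support_dropUntil_subset w hmS (List.mem_of_mem_tail hv2)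
        have : v = m := hkey v hv1 hvw
        subst this
        have hco : (w.dropUntil v hmS).support = v :: (w.dropUntil v hmS).support.tail :=
          support_eq_cons _
        have hnd := (hwp.dropUntil hmS).support_nodup
        rw [hco] at hnd
        exact (List.nodup_cons.1 hnd).1 hv2
    have := tree_path_length hT _ hP
    rw [length_append, hul, hlen2] at this
    omega
  refine ⟨m, ?_, ?_, ?_⟩
  · simp only [seg, Set.mem_setOf_eq]
    have c1 : G.dist x m = G.dist m x := dc G x m
    have c2 : G.dist x y = G.dist y x := dc G x y
    have c3 : G.dist m y = G.dist y m := dc G m y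
    omega
  · simp only [seg, Set.mem_setOf_eq]
    omega
  · exact seg_of_mem_support hc w hwl hmS

/-- First step towards a distinct vertex. -/
lemma exists_unit_step (hc : G.Connected) {x y : V} (h : x ≠ y) :
    ∃ z, z ∈ seg G x y ∧ G.dist x z = 1 := by
  obtain ⟨w, hwl⟩ := hc.exists_walk_length_eq_dist x y
  have hpos : 0 < G.dist x y := hc.pos_dist_of_ne h
  cases w with
  | nil => simp at hwl; simp at hpos
  | cons h' t =>
    rename_i c
    refine ⟨c, ?_, dist_eq_one_iff_adj.2 h'⟩
    exact seg_of_mem_support hc _ hwl (by simp)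

/-- Concatenation of segments: if `b ∈ [a,c]`, `c ∈ [b,d]`, `b ≠ c` then `c ∈ [a,d]`. -/
lemma seg_concat (hT : G.IsTree) {a b c d : V} (h1 : b ∈ seg G a c) (h2 : c ∈ seg G b d)
    (hbc : b ≠ c) : c ∈ seg G a d := by
  have hc := hT.isConnected
  obtain ⟨m, hm1, hm2, hm3⟩ := tree_median hT a c d
  -- hm1 : m ∈ seg a c, hm2 : m ∈ seg a d, hm3 : m ∈ seg c d
  have hstar : G.dist b m = G.dist b c + G.dist c m := by
    have t1 : G.dist b m ≤ G.dist b c + G.dist c m := hc.dist_triangle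
    have t2 : G.dist b d ≤ G.dist b m + G.dist m d := hc.dist_triangle
    have h2' : G.dist b c + G.dist c d = G.dist b d := h2
    have hm3' : G.dist c m + G.dist m d = G.dist c d := hm3
    omega
  have h1' : G.dist a b + G.dist b c = G.dist a c := h1
  have hm1' : G.dist a m + G.dist m c = G.dist a c := hm1
  have hcm : G.dist c m = G.dist m c := dc G c m
  rcases le_total (G.dist a b) (G.dist a m) with hle | hle
  · have := seg_dist_sub hT h1 hm1 hle
    -- G.dist b m + G.dist a b = G.dist a m
    have hmc : m = c := by
      refine seg_eq_of_dist_eq hT hm1 (right_mem_seg a c) ?_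
      omega
    rwa [hmc] at hm2
  · have := seg_dist_sub hT hm1 h1 hle
    -- G.dist m b + G.dist a m = G.dist a b
    have hmb : G.dist m b = G.dist b m := dc G m b
    have hbceq : b = c := by
      refine seg_eq_of_dist_eq hT h1 (right_mem_seg a c) ?_
      omega
    exact absurd hbceq hbc

/-- Chain lemma: a locally geodesic chain in a tree is globally geodesic. -/
lemma tree_chain (hT : G.IsTree) (f : ℕ → V)
    (hs : ∀ k, f (k + 1) ∈ seg G (f k) (f (k + 2)))
    (hne : ∀ k, f k ≠ f (k + 1)) :
    ∀ n, G.dist (f 0) (f (n + 1)) = (∑ k ∈ Finset.range (n + 1), G.dist (f k) (f (k + 1)))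
      ∧ f n ∈ seg G (f 0) (f (n + 1)) := by
  intro n
  induction n with
  | zero => simpa using left_mem_seg (f 0) (f 1)
  | succ n ih =>
    have hmem : f (n + 1) ∈ seg G (f 0) (f (n + 2)) :=
      seg_concat hT ih.2 (hs n) (hne n)
    constructor
    · have hm' : G.dist (f 0) (f (n + 1)) + G.dist (f (n + 1)) (f (n + 2)) =
        G.dist (f 0) (f (n + 2)) := hmem
      rw [Finset.sum_range_succ, ← ih.1, hm']
    · exact hmem

end TreeAux
section Part2
open SimpleGraph Walk

variable {G : SimpleGraph V}

lemma iso_dist_le (hc : G.Connected) (e : G ≃g G) (x y : V) :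
    G.dist (e x) (e y) ≤ G.dist x y := by
  obtain ⟨w, hwl⟩ := hc.exists_walk_length_eq_dist x y
  have := dist_le (w.map e.toHom)
  rwa [Walk.length_map, hwl] at this

lemma iso_dist (hc : G.Connected) (e : G ≃g G) (x y : V) :
    G.dist (e x) (e y) = G.dist x y := by
  refine le_antisymm (iso_dist_le hc e x y) ?_
  have := iso_dist_le hc e.symm (e x) (e y)
  simpa using this

lemma iso_seg (hc : G.Connected) (e : G ≃g G) {a b x : V} (h : x ∈ seg G a b) :
    e x ∈ seg G (e a) (e b) := by
  simp only [seg, Set.mem_setOf_eq] at *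
  rw [iso_dist hc e, iso_dist hc e, iso_dist hc e]
  exact h

lemma ell_le (g : G ≃g G) (x : V) : ell G g ≤ G.dist x (g x) :=
  Nat.sInf_le ⟨x, rfl⟩

lemma ell_exists [Nonempty V] (g : G ≃g G) : ∃ x, G.dist x (g x) = ell G g := by
  obtain ⟨x, hx⟩ := Nat.sInf_mem (Set.range_nonempty fun x => G.dist x (g x))
  exact ⟨x, hx⟩

lemma ell_inv (hc : G.Connected) (g : G ≃g G) : ell G g⁻¹ = ell G g := by
  have hfun : (fun x => G.dist x (g⁻¹ x)) = (fun x => G.dist x (g x)) := by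
    funext x
    have h1 : G.dist (g x) (g (g⁻¹ x)) = G.dist x (g⁻¹ x) := iso_dist hc g x (g⁻¹ x)
    have h2 : g (g⁻¹ x) = x := by simp
    rw [h2] at h1
    rw [← h1, dc]
  unfold ell
  rw [hfun]

lemma ell_conj (hc : G.Connected) (a g : G ≃g G) : ell G (a * g * a⁻¹) = ell G g := by
  have h : (fun x => G.dist x ((a * g * a⁻¹) x)) =
      (fun y => G.dist y (g y)) ∘ (fun x => a⁻¹ x) := by
    funext x
    show G.dist x (a (g (a⁻¹ x))) = G.dist (a⁻¹ x) (g (a⁻¹ x))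
    rw [← iso_dist hc a (a⁻¹ x) (g (a⁻¹ x))]
    congr 1
    simp
  unfold ell
  rw [h]
  congr 1
  exact Function.Surjective.range_comp (fun y => ⟨a y, by simp⟩) _

/-- The broken geodesic chain of points. -/
def chainPt (g₁ g₂ : G ≃g G) (p : V) : ℕ → V
  | 0 => g₁⁻¹ p
  | 1 => p
  | (n+2) => (g₂ * g₁) (chainPt g₁ g₂ p n)

lemma chainPt_seg (hT : G.IsTree) (g₁ g₂ : G ≃g G) (p : V)
    (hF1 : p ∈ seg G (g₁⁻¹ p) (g₂ p))
    (hF2 : p ∈ seg G (g₂⁻¹ p) (g₁ p)) (k : ℕ) :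
    chainPt g₁ g₂ p (k+1) ∈ seg G (chainPt g₁ g₂ p k) (chainPt g₁ g₂ p (k+2)) := by
  have hc := hT.isConnected
  induction k using Nat.twoStepInduction with
  | zero =>
    show p ∈ seg G (g₁⁻¹ p) ((g₂ * g₁) (g₁⁻¹ p))
    have : (g₂ * g₁) (g₁⁻¹ p) = g₂ p := by
      show g₂ (g₁ (g₁⁻¹ p)) = g₂ p
      congr 1
      simp
    rw [this]
    exact hF1
  | one =>
    show (g₂ * g₁) (g₁⁻¹ p) ∈ seg G p ((g₂ * g₁) p)
    have h1 : (g₂ * g₁) (g₁⁻¹ p) = g₂ p := by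
      show g₂ (g₁ (g₁⁻¹ p)) = g₂ p
      congr 1
      simp
    rw [h1]
    have := iso_seg hc g₂ hF2
    simpa using this
  | more n ih _ =>
    show (g₂ * g₁) (chainPt g₁ g₂ p (n+1)) ∈
      seg G ((g₂ * g₁) (chainPt g₁ g₂ p n)) ((g₂ * g₁) (chainPt g₁ g₂ p (n+2)))
    exact iso_seg hc (g₂ * g₁) ih

lemma chainPt_dist (hc : G.Connected) (g₁ g₂ : G ≃g G) (p : V) (k : ℕ) :
    G.dist (chainPt g₁ g₂ p k) (chainPt g₁ g₂ p (k+1)) =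
      if k % 2 = 0 then G.dist p (g₁ p) else G.dist p (g₂ p) := by
  induction k using Nat.twoStepInduction with
  | zero =>
    show G.dist (g₁⁻¹ p) p = _
    simp only [Nat.zero_mod, if_pos rfl, if_true]
    have h1 := iso_dist hc g₁⁻¹ (g₁ p) p
    have h2 : (g₁⁻¹) (g₁ p) = p := by simp
    rw [h2] at h1
    rw [dc G (g₁⁻¹ p) p, h1, dc G (g₁ p) p]
  | one =>
    show G.dist p ((g₂ * g₁) (g₁⁻¹ p)) = _
    have h1 : (g₂ * g₁) (g₁⁻¹ p) = g₂ p := by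
      show g₂ (g₁ (g₁⁻¹ p)) = g₂ p
      congr 1
      simp
    rw [h1]
    norm_num
  | more n ih _ =>
    show G.dist ((g₂ * g₁) (chainPt g₁ g₂ p n)) ((g₂ * g₁) (chainPt g₁ g₂ p (n+1))) = _
    rw [iso_dist hc (g₂ * g₁), ih]
    have : (n + 2) % 2 = n % 2 := by omega
    rw [this]

lemma chainPt_end (g₁ g₂ : G ≃g G) (p : V) (N : ℕ) :
    chainPt g₁ g₂ p (2*N) = ((g₂ * g₁)^N) (g₁⁻¹ p) := by
  induction N with
  | zero => simp [chainPt]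
  | succ N ih =>
    have h2 : 2*(N+1) = 2*N + 2 := by ring
    rw [h2]
    show (g₂ * g₁) (chainPt g₁ g₂ p (2*N)) = _
    rw [ih, pow_succ']
    rfl

lemma sum_alt (l₁ l₂ : ℕ) (M : ℕ) :
    (∑ k ∈ Finset.range (2*M), (if k % 2 = 0 then l₁ else l₂)) = M * (l₁ + l₂) := by
  induction M with
  | zero => simp
  | succ M ih =>
    have h2 : 2*(M+1) = (2*M + 1) + 1 := by ring
    rw [h2, Finset.sum_range_succ, Finset.sum_range_succ, ih]
    rw [if_pos (by omega : (2*M) % 2 = 0), if_neg (by omega : ¬ (2*M+1) % 2 = 0)]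
    ring

lemma pow_displacement_le (hc : G.Connected) (h : G ≃g G) (x : V) (n : ℕ) :
    G.dist x ((h ^ n) x) ≤ n * G.dist x (h x) := by
  induction n with
  | zero => simp
  | succ n ih =>
    have t : G.dist x ((h^(n+1)) x) ≤ G.dist x ((h^n) x) + G.dist ((h^n) x) ((h^(n+1)) x) :=
      hc.dist_triangle
    have e0 : (h^(n+1)) x = (h^n) (h x) := by rw [pow_succ]; rfl
    have e : G.dist ((h^n) x) ((h^(n+1)) x) = G.dist x (h x) := by
      rw [e0]
      exact iso_dist hc (h^n) x (h x)
    calc G.dist x ((h^(n+1)) x) ≤ G.dist x ((h^n) x) + G.dist x (h x) := by omega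
    _ ≤ n * G.dist x (h x) + G.dist x (h x) := by omega
    _ = (n+1) * G.dist x (h x) := by ring

end Part2
/-- A pair of hyperbolic isometries whose axes overlap in a path of length at least the
minimum of the translation lengths (same orientation, l(g₁) ≤ l(g₂)) is not minimal:
the replacement of g₂ by g₂g₁⁻¹ strictly decreases the length sum L. -/
theorem stmt15 (G : SimpleGraph V) (hT : G.IsTree) (g₁ g₂ : G ≃g G)
    (h₁ : noInv G g₁) (h₂ : noInv G g₂)
    (hyp₁ : 0 < ell G g₁) (hyp₂ : 0 < ell G g₂)
    (p q : V)
    (hseg : seg G p q ⊆ axisSet G g₁ ∩ axisSet G g₂)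
    (hd₁ : translatesToward G g₁ p q) (hd₂ : translatesToward G g₂ p q)
    (hΔ : min (ell G g₁) (ell G g₂) ≤ G.dist p q)
    (hle : ell G g₁ ≤ ell G g₂) :
    ell G g₁ + ell G (g₂ * g₁⁻¹) + ell G (g₁ * (g₂ * g₁⁻¹)) +
        ell G (g₁ * (g₂ * g₁⁻¹)⁻¹) <
      ell G g₁ + ell G g₂ + ell G (g₁ * g₂) + ell G (g₁ * g₂⁻¹) := by
  classical
  have hc : G.Connected := hT.isConnected
  haveI : Nonempty V := ⟨p⟩
  have hpmem : p ∈ seg G p q := left_mem_seg p q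
  have hax1 : G.dist p (g₁ p) = ell G g₁ := (hseg hpmem).1
  have hax2 : G.dist p (g₂ p) = ell G g₂ := (hseg hpmem).2
  have hΔ1 : ell G g₁ ≤ G.dist p q := by rwa [min_eq_left hle] at hΔ
  -- hd₁ in ℕ form
  have hd1' : G.dist (g₁ p) q + ell G g₁ = G.dist p q := by
    have h := hd₁
    unfold translatesToward at h
    rw [abs_of_nonneg (sub_nonneg.2 (by exact_mod_cast hΔ1))] at h
    omega
  -- hd₂ in ℕ form, two cases
  have hg2cases : (ell G g₂ ≤ G.dist p q ∧ G.dist (g₂ p) q + ell G g₂ = G.dist p q) ∨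
      (G.dist p q < ell G g₂ ∧ G.dist (g₂ p) q + G.dist p q = ell G g₂) := by
    have h := hd₂
    unfold translatesToward at h
    rcases le_or_gt (ell G g₂) (G.dist p q) with hcase | hcase
    · left
      refine ⟨hcase, ?_⟩
      rw [abs_of_nonneg (sub_nonneg.2 (by exact_mod_cast hcase))] at h
      omega
    · right
      refine ⟨hcase, ?_⟩
      rw [abs_of_nonpos (sub_nonpos.2 (by exact_mod_cast hcase.le))] at h
      omega
  have hg1seg : g₁ p ∈ seg G p q := by
    show G.dist p (g₁ p) + G.dist (g₁ p) q = G.dist p q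
    omega
  have hg2seg_or : (g₂ p ∈ seg G p q) ∨ (q ∈ seg G p (g₂ p)) := by
    rcases hg2cases with ⟨hcase, heq⟩ | ⟨hcase, heq⟩
    · left
      show G.dist p (g₂ p) + G.dist (g₂ p) q = G.dist p q
      omega
    · right
      show G.dist p q + G.dist q (g₂ p) = G.dist p (g₂ p)
      have := dc G q (g₂ p)
      omega
  -- distances to inverse images
  have hinv1 : G.dist p (g₁⁻¹ p) = ell G g₁ := by
    have h1 := iso_dist hc g₁⁻¹ (g₁ p) p
    have h2 : (g₁⁻¹) (g₁ p) = p := by simp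
    rw [h2] at h1
    rw [h1, dc G (g₁ p) p, hax1]
  have hinv2 : G.dist p (g₂⁻¹ p) = ell G g₂ := by
    have h1 := iso_dist hc g₂⁻¹ (g₂ p) p
    have h2 : (g₂⁻¹) (g₂ p) = p := by simp
    rw [h2] at h1
    rw [h1, dc G (g₂ p) p, hax2]
  -- KEY FACT 1 : p ∈ [g₁⁻¹ p, g₂ p]
  have hF1 : p ∈ seg G (g₁⁻¹ p) (g₂ p) := by
    obtain ⟨m, hm1, hm2, hm3⟩ := tree_median hT p (g₁⁻¹ p) (g₂ p)
    by_cases hmp : m = p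
    · subst hmp; exact hm3
    · exfalso
      obtain ⟨z, hz_pm, hz1⟩ := exists_unit_step hc (Ne.symm hmp)
      have hz_in1 : z ∈ seg G p (g₁⁻¹ p) := seg_trans hc hm1 hz_pm
      have hz_in2 : z ∈ seg G p (g₂ p) := seg_trans hc hm2 hz_pm
      have hzpq : z ∈ seg G p q := by
        rcases hg2seg_or with hcase | hcase
        · exact seg_trans hc hcase hz_in2
        · exact mem_seg_of_le hT hz_in2 hcase (by rw [hz1]; omega)
      have hzax : G.dist z (g₁ z) = ell G g₁ := (hseg hzpq).1
      have hzg1 : z ∈ seg G p (g₁ p) := mem_seg_of_le hT hzpq hg1seg (by rw [hz1, hax1]; omega)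
      have himg : g₁ z ∈ seg G (g₁ p) (g₁ (g₁⁻¹ p)) := iso_seg hc g₁ hz_in1
      have hgg : g₁ (g₁⁻¹ p) = p := by simp
      rw [hgg] at himg
      have himg2 : g₁ z ∈ seg G p (g₁ p) := seg_symm himg
      have hd_img : G.dist (g₁ p) (g₁ z) = 1 := by rw [iso_dist hc g₁ p z]; exact hz1
      have hdpz' : G.dist p (g₁ z) + 1 = ell G g₁ := by
        have h9 : G.dist (g₁ p) (g₁ z) + G.dist (g₁ z) p = G.dist (g₁ p) p := himg
        have c1 : G.dist (g₁ z) p = G.dist p (g₁ z) := dc G _ _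
        have c2 : G.dist (g₁ p) p = G.dist p (g₁ p) := dc G _ _
        omega
      rcases eq_or_lt_of_le (show 1 ≤ ell G g₁ from hyp₁) with h1eq | h1lt
      · -- ell g₁ = 1 : inversion
        have hzg1p : z = g₁ p :=
          seg_eq_of_dist_eq hT hzg1 (right_mem_seg p (g₁ p)) (by rw [hz1, hax1]; omega)
        have hgz : g₁ z = p := by
          have h0 : G.dist p (g₁ z) = 0 := by omega
          exact (hc.dist_eq_zero_iff.1 h0).symm
        have hadj : G.Adj p (g₁ p) := dist_eq_one_iff_adj.1 (by rw [hax1]; omega)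
        exact h₁ p (g₁ p) hadj ⟨rfl, by rw [← hzg1p, hgz]⟩
      · -- ell g₁ ≥ 2
        have hle2 : G.dist p z ≤ G.dist p (g₁ z) := by omega
        have := seg_dist_sub hT hzg1 himg2 hle2
        omega
  -- KEY FACT 2 : p ∈ [g₂⁻¹ p, g₁ p]
  have hF2 : p ∈ seg G (g₂⁻¹ p) (g₁ p) := by
    obtain ⟨m, hm1, hm2, hm3⟩ := tree_median hT p (g₂⁻¹ p) (g₁ p)
    by_cases hmp : m = p
    · subst hmp; exact hm3
    · exfalso
      obtain ⟨z, hz_pm, hz1⟩ := exists_unit_step hc (Ne.symm hmp)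
      have hz_in1 : z ∈ seg G p (g₂⁻¹ p) := seg_trans hc hm1 hz_pm
      have hz_in2 : z ∈ seg G p (g₁ p) := seg_trans hc hm2 hz_pm
      have hzpq : z ∈ seg G p q := seg_trans hc hg1seg hz_in2
      have hzax : G.dist z (g₂ z) = ell G g₂ := (hseg hzpq).2
      have hzg2 : z ∈ seg G p (g₂ p) := by
        rcases hg2seg_or with hcase | hcase
        · exact mem_seg_of_le hT hzpq hcase (by rw [hz1, hax2]; omega)
        · exact seg_trans hc hcase hzpq
      have himg : g₂ z ∈ seg G (g₂ p) (g₂ (g₂⁻¹ p)) := iso_seg hc g₂ hz_in1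
      have hgg : g₂ (g₂⁻¹ p) = p := by simp
      rw [hgg] at himg
      have himg2 : g₂ z ∈ seg G p (g₂ p) := seg_symm himg
      have hd_img : G.dist (g₂ p) (g₂ z) = 1 := by rw [iso_dist hc g₂ p z]; exact hz1
      have hdpz' : G.dist p (g₂ z) + 1 = ell G g₂ := by
        have h9 : G.dist (g₂ p) (g₂ z) + G.dist (g₂ z) p = G.dist (g₂ p) p := himg
        have c1 : G.dist (g₂ z) p = G.dist p (g₂ z) := dc G _ _
        have c2 : G.dist (g₂ p) p = G.dist p (g₂ p) := dc G _ _
        omega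
      rcases eq_or_lt_of_le (show 1 ≤ ell G g₂ from hyp₂) with h1eq | h1lt
      · have hzg2p : z = g₂ p :=
          seg_eq_of_dist_eq hT hzg2 (right_mem_seg p (g₂ p)) (by rw [hz1, hax2]; omega)
        have hgz : g₂ z = p := by
          have h0 : G.dist p (g₂ z) = 0 := by omega
          exact (hc.dist_eq_zero_iff.1 h0).symm
        have hadj : G.Adj p (g₂ p) := dist_eq_one_iff_adj.1 (by rw [hax2]; omega)
        exact h₂ p (g₂ p) hadj ⟨rfl, by rw [← hzg2p, hgz]⟩
      · have hle2 : G.dist p z ≤ G.dist p (g₂ z) := by omega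
        have := seg_dist_sub hT hzg2 himg2 hle2
        omega
  -- the (broken) geodesic chain and the displacement of powers of g₁g₂ at p
  have hchain_ne : ∀ k, chainPt g₁ g₂ p k ≠ chainPt g₁ g₂ p (k+1) := by
    intro k heq
    have hd := chainPt_dist hc g₁ g₂ p k
    rw [← heq, SimpleGraph.dist_self] at hd
    split_ifs at hd <;> omega
  have hkeydist : ∀ N : ℕ,
      G.dist p (((g₁ * g₂)^(N+1)) p) = (N+1) * (ell G g₁ + ell G g₂) := by
    intro N
    have hch := (tree_chain hT (chainPt g₁ g₂ p)
      (chainPt_seg hT g₁ g₂ p hF1 hF2) hchain_ne (2*N + 1)).1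
    have hsum : (∑ k ∈ Finset.range (2*N + 1 + 1),
        G.dist (chainPt g₁ g₂ p k) (chainPt g₁ g₂ p (k+1))) =
        (N+1) * (ell G g₁ + ell G g₂) := by
      have h2 : 2*N + 1 + 1 = 2*(N+1) := by ring
      rw [h2]
      rw [Finset.sum_congr rfl (fun k _ => chainPt_dist hc g₁ g₂ p k)]
      rw [hax1, hax2] at *
      exact sum_alt _ _ _
    rw [hsum] at hch
    have hend : chainPt g₁ g₂ p (2*N + 1 + 1) = ((g₂ * g₁)^(N+1)) (g₁⁻¹ p) := by
      have h2 : 2*N + 1 + 1 = 2*(N+1) := by ring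
      rw [h2, chainPt_end]
    rw [hend] at hch
    have hiso := iso_dist hc g₁ (g₁⁻¹ p) (((g₂ * g₁)^(N+1)) (g₁⁻¹ p))
    have hgg : g₁ (g₁⁻¹ p) = p := by simp
    have hsc : g₁ * (g₂ * g₁)^(N+1) = (g₁ * g₂)^(N+1) * g₁ :=
      (SemiconjBy.pow_right (by exact (mul_assoc g₁ g₂ g₁).symm) (N+1))
    have happ : g₁ (((g₂ * g₁)^(N+1)) (g₁⁻¹ p)) = ((g₁ * g₂)^(N+1)) p := by
      show (g₁ * (g₂ * g₁)^(N+1) * g₁⁻¹) p = _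
      rw [hsc, mul_inv_cancel_right]
    rw [hgg, happ] at hiso
    rw [hiso]
    exact hch
  -- lower bound for ell (g₁ * g₂)
  have hC : ell G g₁ + ell G g₂ ≤ ell G (g₁ * g₂) := by
    by_contra hlt
    push_neg at hlt
    obtain ⟨x₀, hx₀⟩ := ell_exists (g₁ * g₂)
    set D := G.dist p x₀ with hD
    have key : ∀ N : ℕ, (N+1) * (ell G g₁ + ell G g₂) ≤ 2 * D + (N+1) * ell G (g₁ * g₂) := by
      intro N
      have t1 : G.dist p (((g₁ * g₂)^(N+1)) p) ≤
          G.dist p x₀ + G.dist x₀ (((g₁ * g₂)^(N+1)) x₀) +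
            G.dist (((g₁ * g₂)^(N+1)) x₀) (((g₁ * g₂)^(N+1)) p) := by
        have a1 : G.dist p (((g₁ * g₂)^(N+1)) p) ≤
            G.dist p (((g₁ * g₂)^(N+1)) x₀) + G.dist (((g₁ * g₂)^(N+1)) x₀) (((g₁ * g₂)^(N+1)) p) :=
          hc.dist_triangle
        have a2 : G.dist p (((g₁ * g₂)^(N+1)) x₀) ≤
            G.dist p x₀ + G.dist x₀ (((g₁ * g₂)^(N+1)) x₀) := hc.dist_triangle
        omega
      have t2 : G.dist (((g₁ * g₂)^(N+1)) x₀) (((g₁ * g₂)^(N+1)) p) = D := by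
        rw [iso_dist hc _ x₀ p, dc G x₀ p]
      have t3 : G.dist x₀ (((g₁ * g₂)^(N+1)) x₀) ≤ (N+1) * ell G (g₁ * g₂) := by
        have := pow_displacement_le hc (g₁ * g₂) x₀ (N+1)
        rwa [hx₀] at this
      have t4 := hkeydist N
      omega
    have hk := key (2*D)
    have h2 : (2*D+1) * (ell G (g₁*g₂) + 1) ≤ (2*D+1) * (ell G g₁ + ell G g₂) :=
      Nat.mul_le_mul_left _ (by omega)
    rw [Nat.mul_add, Nat.mul_one] at h2
    generalize (2*D+1) * ell G (g₁ * g₂) = A at *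
    generalize (2*D+1) * (ell G g₁ + ell G g₂) = B at *
    omega
  -- upper bound for ell (g₁ * (g₂ * g₁⁻¹)⁻¹)
  have hg1g2p : G.dist (g₁ p) (g₂ p) + ell G g₁ ≤ ell G g₂ := by
    rcases hg2cases with ⟨hcase, heq⟩ | ⟨hcase, heq⟩
    · have hg2seg : g₂ p ∈ seg G p q := by
        show G.dist p (g₂ p) + G.dist (g₂ p) q = G.dist p q
        omega
      have := seg_dist_sub hT hg1seg hg2seg (by rw [hax1, hax2]; exact hle)
      omega
    · have tri : G.dist (g₁ p) (g₂ p) ≤ G.dist (g₁ p) q + G.dist q (g₂ p) := hc.dist_triangle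
      have c : G.dist q (g₂ p) = G.dist (g₂ p) q := dc G _ _
      omega
  have hEbound : ell G (g₁ * (g₂ * g₁⁻¹)⁻¹) ≤ ell G g₂ := by
    have hgrp : g₁ * (g₂ * g₁⁻¹)⁻¹ = g₁ * (g₁ * g₂⁻¹) := by
      rw [mul_inv_rev, inv_inv]
    have happ : (g₁ * (g₂ * g₁⁻¹)⁻¹) (g₂ p) = g₁ (g₁ p) := by
      rw [hgrp]
      show g₁ (g₁ (g₂⁻¹ (g₂ p))) = g₁ (g₁ p)
      congr 2
      simp
    have hle1 : ell G (g₁ * (g₂ * g₁⁻¹)⁻¹) ≤ G.dist (g₂ p) ((g₁ * (g₂ * g₁⁻¹)⁻¹) (g₂ p)) :=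
      ell_le _ _
    rw [happ] at hle1
    have tri : G.dist (g₂ p) (g₁ (g₁ p)) ≤ G.dist (g₂ p) (g₁ p) + G.dist (g₁ p) (g₁ (g₁ p)) :=
      hc.dist_triangle
    have e2 : G.dist (g₁ p) (g₁ (g₁ p)) = ell G g₁ := by
      rw [iso_dist hc g₁ p (g₁ p)]; exact hax1
    have c : G.dist (g₂ p) (g₁ p) = G.dist (g₁ p) (g₂ p) := dc G _ _
    omega
  -- conjugation / inverse identities
  have hconj : ell G (g₁ * (g₂ * g₁⁻¹)) = ell G g₂ := by
    have hgrp : g₁ * (g₂ * g₁⁻¹) = g₁ * g₂ * g₁⁻¹ := (mul_assoc _ _ _).symm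
    rw [hgrp, ell_conj hc g₁ g₂]
  have hswap : ell G (g₂ * g₁⁻¹) = ell G (g₁ * g₂⁻¹) := by
    have hgrp : (g₂ * g₁⁻¹)⁻¹ = g₁ * g₂⁻¹ := by rw [mul_inv_rev, inv_inv]
    rw [← hgrp, ell_inv hc]
  rw [hconj, hswap]
  omega
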